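/- arXiv:hep-ph/9306290 — 3 statements merged into one kernel-verified Lean document; each statement's English description precedes it below -/
import Mathlib

section
/- Let M₁ > 0 and M₂ > 0 (with M₁² and M₂² in V₀ the squares of M₁ and M₂). For every real v, the configuration Δ = Δc = (v/M₁)·τ₁, Δbar = Δbarc = −(v/M₂)·τ₁, κ = κ′ = 0 satisfies V₀ = 8·v²·(1 − M′²/(M₁M₂)) (all D-terms vanish along this direction). Consequently, if V₀ is bounded from below over all configurations, then M′² ≤ M₁·M₂. -/
/-! Along `Δ = Δc ∝ τ₁`, `Δbar = Δbarc ∝ τ₁`, `κ = κ' = 0` every D-term vanishes: the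
SU(2) ones because `Tr(τ₁ τₘ τ₁) = 0`, the U(1) one because the charges of `Δ` and `Δc`
(and of `Δbar` and `Δbarc`) cancel. On this ray `V₀` is therefore the quadratic
`8v²(1 − M′²/(M₁M₂))`, which is bounded below only if its coefficient is nonnegative. -/

open Matrix

/-- The Pauli matrices `τ₁, τ₂, τ₃`. -/
noncomputable def pauli : Fin 3 → Matrix (Fin 2) (Fin 2) ℂ :=
  ![!![0, 1; 1, 0], !![0, -Complex.I; Complex.I, 0], !![1, 0; 0, -1]]

/-- The diagonal bidoublet VEV `Φ = diag(κ, κ')`. -/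
noncomputable def PhiM (κ κ' : ℂ) : Matrix (Fin 2) (Fin 2) ℂ := !![κ, 0; 0, κ']

/-- The tree-level Higgs potential of the minimal SUSY left-right model with vanishing
slepton fields, in terms of the triplet fields `Δ, Δbar, Δc, Δbarc` and the diagonal
bidoublet entries `κ, κ'`.  The parameters `M1sq, M2sq, Mpsq (= M′²), Mphisq, musq`
are arbitrary reals and `g, g'` are the gauge couplings. -/
noncomputable def V0 (M1sq M2sq Mpsq Mphisq musq g g' : ℝ)
    (Δ Δbar Δc Δbarc : Matrix (Fin 2) (Fin 2) ℂ) (κ κ' : ℂ) : ℝ :=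
  M1sq * ((Δᴴ * Δ).trace + (Δcᴴ * Δc).trace).re
  + M2sq * ((Δbarᴴ * Δbar).trace + (Δbarcᴴ * Δbarc).trace).re
  + 2 * Mpsq * ((Δ * Δbar).trace + (Δc * Δbarc).trace).re
  + Mphisq * (‖κ‖ ^ 2 + ‖κ'‖ ^ 2)
  + 2 * musq * (κ * κ').re
  + g ^ 2 / 8 * ∑ m : Fin 3,
      ‖(((2 : ℂ) • (Δᴴ * pauli m * Δ) + (2 : ℂ) • (Δbarᴴ * pauli m * Δbar)
        + (PhiM κ κ')ᴴ * pauli m * PhiM κ κ').trace)‖ ^ 2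
  + g ^ 2 / 8 * ∑ m : Fin 3,
      ‖(((2 : ℂ) • (Δcᴴ * pauli m * Δc) + (2 : ℂ) • (Δbarcᴴ * pauli m * Δbarc)
        + PhiM κ κ' * (pauli m)ᵀ * (PhiM κ κ')ᴴ).trace)‖ ^ 2
  + g' ^ 2 / 8 * ‖((2 : ℂ) * ((Δᴴ * Δ).trace - (Δcᴴ * Δc).trace
      - (Δbarᴴ * Δbar).trace + (Δbarcᴴ * Δbarc).trace))‖ ^ 2

lemma pauli_isHermitian (m : Fin 3) : (pauli m).IsHermitian := by
  fin_cases m <;> ext i j <;> fin_cases i <;> fin_cases j <;> simp [pauli]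

lemma trace_pauli_zero_mul_pauli_zero : (pauli 0 * pauli 0).trace = 2 := by
  simp [pauli, Matrix.trace_fin_two]; norm_num

lemma trace_pauli_zero_mul_pauli_mul_pauli_zero (m : Fin 3) :
    (pauli 0 * pauli m * pauli 0).trace = 0 := by
  fin_cases m <;> simp [pauli, Matrix.trace_fin_two]

lemma PhiM_zero : PhiM 0 0 = 0 := by
  ext i j; fin_cases i <;> fin_cases j <;> rfl

lemma conjTranspose_ofReal_smul_pauli_zero (a : ℝ) :
    ((a : ℂ) • pauli 0)ᴴ = (a : ℂ) • pauli 0 := by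
  rw [conjTranspose_smul, (pauli_isHermitian 0).eq, Complex.star_def, Complex.conj_ofReal]

lemma trace_ofReal_smul_pauli_zero_mul (a b : ℝ) :
    ((a : ℂ) • pauli 0 * (b : ℂ) • pauli 0).trace = ((2 * a * b : ℝ) : ℂ) := by
  rw [smul_mul_smul_comm, trace_smul, trace_pauli_zero_mul_pauli_zero, smul_eq_mul]
  push_cast; ring

lemma trace_conjTranspose_smul_pauli_zero_mul_pauli_mul (a : ℝ) (m : Fin 3) :
    (((a : ℂ) • pauli 0)ᴴ * pauli m * ((a : ℂ) • pauli 0)).trace = 0 := by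
  rw [conjTranspose_ofReal_smul_pauli_zero, smul_mul_assoc, mul_smul_comm, smul_mul_assoc,
    trace_smul, trace_smul, trace_pauli_zero_mul_pauli_mul_pauli_zero, smul_zero, smul_zero]

lemma V0_ofReal_smul_pauli_zero (M1sq M2sq Mpsq Mphisq musq g g' a b : ℝ) :
    V0 M1sq M2sq Mpsq Mphisq musq g g' ((a : ℂ) • pauli 0) ((b : ℂ) • pauli 0)
      ((a : ℂ) • pauli 0) ((b : ℂ) • pauli 0) 0 0
      = 4 * M1sq * a ^ 2 + 4 * M2sq * b ^ 2 + 8 * Mpsq * a * b := by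
  simp only [V0, PhiM_zero, trace_add, trace_smul, trace_conjTranspose_smul_pauli_zero_mul_pauli_mul]
  simp only [conjTranspose_ofReal_smul_pauli_zero, trace_ofReal_smul_pauli_zero_mul]
  simp
  ring

lemma nonneg_of_forall_le_mul_sq {c C : ℝ} (h : ∀ v : ℝ, C ≤ c * v ^ 2) : 0 ≤ c := by
  by_contra! hc
  have ht : 0 ≤ (|C| + 1) / -c := div_nonneg (by positivity) (by linarith)
  have hv := h √((|C| + 1) / -c)
  rw [Real.sq_sqrt ht, mul_div_assoc', div_neg, mul_comm, mul_div_assoc, div_self hc.ne,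
    mul_one] at hv
  linarith [neg_abs_le C]

lemma V0_flat_direction {M1 M2 : ℝ} (h1 : M1 ≠ 0) (h2 : M2 ≠ 0) (Mpsq Mphisq musq g g' v : ℝ) :
    V0 (M1 ^ 2) (M2 ^ 2) Mpsq Mphisq musq g g'
        (((v / M1 : ℝ) : ℂ) • pauli 0) ((-(v / M2 : ℝ) : ℂ) • pauli 0)
        (((v / M1 : ℝ) : ℂ) • pauli 0) ((-(v / M2 : ℝ) : ℂ) • pauli 0) 0 0
      = 8 * v ^ 2 * (1 - Mpsq / (M1 * M2)) := by
  rw [← Complex.ofReal_neg, V0_ofReal_smul_pauli_zero]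
  field_simp
  ring

/-- Let `M₁ > 0`, `M₂ > 0`.  Along the D-flat direction `Δ = Δc = (v/M₁)τ₁`,
`Δbar = Δbarc = −(v/M₂)τ₁`, `κ = κ' = 0` the potential (with `M₁², M₂²` the squares of
`M₁, M₂`) equals `8v²(1 − M′²/(M₁M₂))`; hence if it is bounded from below then
`M′² ≤ M₁M₂`. -/
theorem V0_flat_direction_Mp (M1 M2 Mpsq Mphisq musq g g' : ℝ)
    (h1 : 0 < M1) (h2 : 0 < M2) :
    (∀ v : ℝ, V0 (M1 ^ 2) (M2 ^ 2) Mpsq Mphisq musq g g'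
        (((v / M1 : ℝ) : ℂ) • pauli 0) ((-(v / M2 : ℝ) : ℂ) • pauli 0)
        (((v / M1 : ℝ) : ℂ) • pauli 0) ((-(v / M2 : ℝ) : ℂ) • pauli 0) 0 0
      = 8 * v ^ 2 * (1 - Mpsq / (M1 * M2))) ∧
    ((∃ C : ℝ, ∀ (Δ Δbar Δc Δbarc : Matrix (Fin 2) (Fin 2) ℂ) (κ κ' : ℂ),
        C ≤ V0 (M1 ^ 2) (M2 ^ 2) Mpsq Mphisq musq g g' Δ Δbar Δc Δbarc κ κ') →
      Mpsq ≤ M1 * M2) := by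
  refine ⟨V0_flat_direction h1.ne' h2.ne' Mpsq Mphisq musq g g', fun ⟨C, hC⟩ => ?_⟩
  have hcoef : 0 ≤ 8 * (1 - Mpsq / (M1 * M2)) := nonneg_of_forall_le_mul_sq fun v =>
    (hC _ _ _ _ 0 0).trans_eq ((V0_flat_direction h1.ne' h2.ne' _ _ _ _ _ v).trans (by ring))
  rw [← div_le_one (mul_pos h1 h2)]
  linarith
end

section
/- For every real κ, the configuration with all triplets zero, κ′ = −κ satisfies V₀ = 2·(M_φ² − μ²)·κ², and the configuration with all triplets zero, κ′ = κ satisfies V₀ = 2·(M_φ² + μ²)·κ² (all D-terms vanish along both directions). Consequently, if V₀ is bounded from below over all configurations, then M_φ² ≥ 0 and |μ²| ≤ M_φ². -/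
open Matrix

/-! With the triplets switched off only the bidoublet D-terms survive, and since `Φ` is diagonal
their `τ₁, τ₂` components vanish, so they see `Φ` only through `|κ|² - |κ'|²`. Along `κ' = ±κ`
this is zero, leaving the quadratic form `2(M_φ² ∓ μ²)κ²`, which is bounded below only if its
coefficient is nonnegative. -/

lemma nonneg_of_forall_le_mul_sq_s6 {a C : ℝ} (h : ∀ x : ℝ, C ≤ a * x ^ 2) : 0 ≤ a := by
  by_contra! ha
  obtain ⟨x, hx⟩ := (((Filter.tendsto_pow_atTop two_ne_zero).const_mul_atTop_of_neg ha).eventually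
    (Filter.eventually_lt_atBot C)).exists
  exact (h x).not_gt hx

lemma trace_PhiM_conjTranspose_mul_pauli_mul (κ κ' : ℂ) (m : Fin 3) :
    ((PhiM κ κ')ᴴ * pauli m * PhiM κ κ').trace =
      if m = 2 then ((‖κ‖ ^ 2 - ‖κ'‖ ^ 2 : ℝ) : ℂ) else 0 := by
  fin_cases m <;>
    simp [pauli, PhiM, trace_fin_two, mul_apply, Fin.sum_univ_two, Complex.conj_mul', sub_eq_add_neg]

lemma trace_PhiM_mul_pauli_transpose_mul_conjTranspose (κ κ' : ℂ) (m : Fin 3) :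
    (PhiM κ κ' * (pauli m)ᵀ * (PhiM κ κ')ᴴ).trace =
      if m = 2 then ((‖κ‖ ^ 2 - ‖κ'‖ ^ 2 : ℝ) : ℂ) else 0 := by
  fin_cases m <;>
    simp [pauli, PhiM, trace_fin_two, mul_apply, vecMul, dotProduct, Fin.sum_univ_two,
      Complex.mul_conj', sub_eq_add_neg]

section

variable (M1sq M2sq Mpsq Mphisq musq g g' : ℝ)

lemma V0_zero_triplets (κ κ' : ℂ) :
    V0 M1sq M2sq Mpsq Mphisq musq g g' 0 0 0 0 κ κ' =
      Mphisq * (‖κ‖ ^ 2 + ‖κ'‖ ^ 2) + 2 * musq * (κ * κ').re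
        + g ^ 2 / 4 * (‖κ‖ ^ 2 - ‖κ'‖ ^ 2) ^ 2 := by
  simp only [V0, conjTranspose_zero, mul_zero, zero_mul, smul_zero, trace_zero, add_zero, zero_add,
    Complex.zero_re, Complex.mul_re, trace_PhiM_conjTranspose_mul_pauli_mul,
    trace_PhiM_mul_pauli_transpose_mul_conjTranspose, Fin.sum_univ_three, Fin.isValue,
    Fin.reduceEq, ↓reduceIte, norm_zero, ne_eq, OfNat.ofNat_ne_zero, not_false_eq_true, zero_pow,
    Complex.norm_real, Real.norm_eq_abs, sq_abs, sub_self]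
  ring

lemma V0_zero_triplets_ofReal (κ κ' : ℝ) :
    V0 M1sq M2sq Mpsq Mphisq musq g g' 0 0 0 0 κ κ' =
      Mphisq * (κ ^ 2 + κ' ^ 2) + 2 * musq * κ * κ' + g ^ 2 / 4 * (κ ^ 2 - κ' ^ 2) ^ 2 := by
  rw [V0_zero_triplets]
  simp only [Complex.norm_real, Real.norm_eq_abs, sq_abs, ← Complex.ofReal_mul, Complex.ofReal_re]
  ring

end

/-- With all triplets zero and `κ' = −κ` (`κ` real) the potential equals
`2(M_φ² − μ²)κ²`, and with `κ' = κ` it equals `2(M_φ² + μ²)κ²` (all D-terms vanish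
along both directions); hence if the potential is bounded from below then `M_φ² ≥ 0`
and `|μ²| ≤ M_φ²`. -/
theorem V0_flat_directions_phi (M1sq M2sq Mpsq Mphisq musq g g' : ℝ) :
    (∀ κ : ℝ, V0 M1sq M2sq Mpsq Mphisq musq g g' 0 0 0 0 (κ : ℂ) (-(κ : ℂ))
      = 2 * (Mphisq - musq) * κ ^ 2) ∧
    (∀ κ : ℝ, V0 M1sq M2sq Mpsq Mphisq musq g g' 0 0 0 0 (κ : ℂ) (κ : ℂ)
      = 2 * (Mphisq + musq) * κ ^ 2) ∧
    ((∃ C : ℝ, ∀ (Δ Δbar Δc Δbarc : Matrix (Fin 2) (Fin 2) ℂ) (κ κ' : ℂ),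
        C ≤ V0 M1sq M2sq Mpsq Mphisq musq g g' Δ Δbar Δc Δbarc κ κ') →
      0 ≤ Mphisq ∧ |musq| ≤ Mphisq) := by
  have h_minus (κ : ℝ) : V0 M1sq M2sq Mpsq Mphisq musq g g' 0 0 0 0 (κ : ℂ) (-(κ : ℂ))
      = 2 * (Mphisq - musq) * κ ^ 2 := by
    rw [← Complex.ofReal_neg, V0_zero_triplets_ofReal]; ring
  have h_plus (κ : ℝ) : V0 M1sq M2sq Mpsq Mphisq musq g g' 0 0 0 0 (κ : ℂ) (κ : ℂ)
      = 2 * (Mphisq + musq) * κ ^ 2 := by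
    rw [V0_zero_triplets_ofReal]; ring
  refine ⟨h_minus, h_plus, fun ⟨C, hC⟩ => ?_⟩
  have h_sub : 0 ≤ 2 * (Mphisq - musq) :=
    nonneg_of_forall_le_mul_sq_s6 fun κ => h_minus κ ▸ hC 0 0 0 0 _ _
  have h_add : 0 ≤ 2 * (Mphisq + musq) :=
    nonneg_of_forall_le_mul_sq_s6 fun κ => h_plus κ ▸ hC 0 0 0 0 _ _
  exact ⟨by linarith, abs_le.2 ⟨by linarith, by linarith⟩⟩
end

section
/- For all 2×2 complex matrices X, Y, all complex numbers κ, κ′, and all real parameters M₁², M₂², M′², M_φ², μ², g, g′, the parity-symmetric configuration (Δ = Δc = X/√2, Δbar = Δbarc = Y/√2) satisfies V₀(X/√2, Y/√2, X/√2, Y/√2, κ, κ′) ≤ V₀(0, 0, X, Y, κ, κ′), the value at the maximally parity-violating configuration (Δ = Δbar = 0, Δc = X, Δbarc = Y). Indeed all quadratic mass terms and the combination Tr(ΔΔbar) + Tr(ΔcΔbarc) are equal for the two configurations, the U(1)_{B−L} D-term vanishes for the symmetric one, and the SU(2) D-terms are no larger for the symmetric one. -/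
open Matrix

/-! With `a m = Tr(X†τₘX) + Tr(Y†τₘY)` and `c m = Tr(Φ†τₘΦ)`
(which equals `Tr(Φτₘᵀ Φ†)` because `Φ` is diagonal), the two configurations have the
same mass and `μ`-terms (each symmetric field carries half of the weight of the corresponding
asymmetric one). Their SU(2) D-terms are `2‖a m + c m‖²` and `‖c m‖² + ‖2 a m + c m‖²`, which
differ by `2‖a m‖²` by the parallelogram law, and only the asymmetric configuration has a
B−L D-term. So the difference of the potentials is a sum of squares. -/

theorem Matrix.trace_diagonal_mul_transpose_mul_conjTranspose {n α : Type*} [Fintype n]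
    [DecidableEq n] [CommSemiring α] [StarRing α] (d : n → α) (B : Matrix n n α) :
    (diagonal d * Bᵀ * (diagonal d)ᴴ).trace = ((diagonal d)ᴴ * B * diagonal d).trace := by
  simp only [trace, diagonal_conjTranspose, mul_diagonal, diagonal_mul, diag_apply,
    transpose_apply]
  exact Finset.sum_congr rfl fun i _ => by ring

theorem Matrix.conjTranspose_smul_mul_smul {n α : Type*} [Fintype n] [CommSemiring α]
    [StarRing α] (s : α) (A C : Matrix n n α) :
    (s • A)ᴴ * (s • C) = (star s * s) • (Aᴴ * C) := by
  rw [conjTranspose_smul, smul_mul_smul_comm]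

theorem Matrix.conjTranspose_smul_mul_mul_smul {n α : Type*} [Fintype n] [CommSemiring α]
    [StarRing α] (s : α) (A B C : Matrix n n α) :
    (s • A)ᴴ * B * (s • C) = (star s * s) • (Aᴴ * B * C) := by
  rw [conjTranspose_smul, Matrix.smul_mul, Matrix.smul_mul, Matrix.mul_smul, smul_smul]

theorem norm_two_smul_add_sq_add_norm_sq {𝕜 E : Type*} [RCLike 𝕜] [NormedAddCommGroup E]
    [InnerProductSpace 𝕜 E] (x y : E) :
    ‖(2 : 𝕜) • x + y‖ ^ 2 + ‖y‖ ^ 2 = 2 * ‖x + y‖ ^ 2 + 2 * ‖x‖ ^ 2 := by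
  have h := parallelogram_law_with_norm 𝕜 (x + y) x
  rw [add_sub_cancel_left, add_right_comm] at h
  rw [two_smul]
  linarith

theorem inv_sqrt_two_mul_self : ((Real.sqrt 2 : ℂ))⁻¹ * ((Real.sqrt 2 : ℂ))⁻¹ = 2⁻¹ := by
  rw [← mul_inv, ← Complex.ofReal_mul, Real.mul_self_sqrt zero_le_two]
  norm_num

theorem star_inv_sqrt_two_mul_self :
    star ((Real.sqrt 2 : ℂ))⁻¹ * ((Real.sqrt 2 : ℂ))⁻¹ = 2⁻¹ := by
  rw [star_inv₀, Complex.star_def, Complex.conj_ofReal, inv_sqrt_two_mul_self]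

theorem PhiM_eq_diagonal (κ κ' : ℂ) : PhiM κ κ' = diagonal ![κ, κ'] := by
  ext i j
  fin_cases i <;> fin_cases j <;> rfl

theorem V0_zero_zero_sub_V0_parity_symmetric (M1sq M2sq Mpsq Mphisq musq g g' : ℝ)
    (X Y : Matrix (Fin 2) (Fin 2) ℂ) (κ κ' : ℂ) :
    V0 M1sq M2sq Mpsq Mphisq musq g g' 0 0 X Y κ κ'
      - V0 M1sq M2sq Mpsq Mphisq musq g g'
        (((Real.sqrt 2 : ℂ))⁻¹ • X) (((Real.sqrt 2 : ℂ))⁻¹ • Y)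
        (((Real.sqrt 2 : ℂ))⁻¹ • X) (((Real.sqrt 2 : ℂ))⁻¹ • Y) κ κ'
    = g ^ 2 / 4 * ∑ m, ‖(Xᴴ * pauli m * X).trace + (Yᴴ * pauli m * Y).trace‖ ^ 2
      + g' ^ 2 / 2 * ‖(Yᴴ * Y).trace - (Xᴴ * X).trace‖ ^ 2 := by
  set s : ℂ := ((Real.sqrt 2 : ℂ))⁻¹
  set a : Fin 3 → ℂ := fun m => (Xᴴ * pauli m * X).trace + (Yᴴ * pauli m * Y).trace
  set c : Fin 3 → ℂ := fun m => ((PhiM κ κ')ᴴ * pauli m * PhiM κ κ').trace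
  have hc : ∀ m, (PhiM κ κ' * (pauli m)ᵀ * (PhiM κ κ')ᴴ).trace = c m := fun m => by
    simp only [c, PhiM_eq_diagonal, trace_diagonal_mul_transpose_mul_conjTranspose]
  have hsandwich : ∀ A B C : Matrix (Fin 2) (Fin 2) ℂ,
      (2 : ℂ) • ((s • A)ᴴ * B * (s • C)) = Aᴴ * B * C := fun A B C => by
    rw [conjTranspose_smul_mul_mul_smul, star_inv_sqrt_two_mul_self, smul_inv_smul₀ two_ne_zero]
  have hDL : ∀ m, ((2 : ℂ) • ((s • X)ᴴ * pauli m * (s • X))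
      + (2 : ℂ) • ((s • Y)ᴴ * pauli m * (s • Y))
      + (PhiM κ κ')ᴴ * pauli m * PhiM κ κ').trace = a m + c m := fun m => by
    simp only [hsandwich, trace_add, a, c]
  have hDR : ∀ m, ((2 : ℂ) • ((s • X)ᴴ * pauli m * (s • X))
      + (2 : ℂ) • ((s • Y)ᴴ * pauli m * (s • Y))
      + PhiM κ κ' * (pauli m)ᵀ * (PhiM κ κ')ᴴ).trace = a m + c m := fun m => by
    simp only [hsandwich, trace_add, hc, a]
  have hDR' : ∀ m, ((2 : ℂ) • (Xᴴ * pauli m * X) + (2 : ℂ) • (Yᴴ * pauli m * Y)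
      + PhiM κ κ' * (pauli m)ᵀ * (PhiM κ κ')ᴴ).trace = (2 : ℂ) • a m + c m := fun m => by
    simp only [trace_add, trace_smul, hc, a, smul_add]
  have hpar : ∀ m, ‖(2 : ℂ) • a m + c m‖ ^ 2
      = 2 * ‖a m + c m‖ ^ 2 + 2 * ‖a m‖ ^ 2 - ‖c m‖ ^ 2 :=
    fun m => eq_sub_of_add_eq (norm_two_smul_add_sq_add_norm_sq (a m) (c m))
  have hquad : ∀ A B : Matrix (Fin 2) (Fin 2) ℂ,
      ((s • A)ᴴ * (s • B)).trace + ((s • A)ᴴ * (s • B)).trace = (Aᴴ * B).trace := fun A B => by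
    rw [conjTranspose_smul_mul_smul, star_inv_sqrt_two_mul_self, trace_smul, smul_eq_mul]
    ring
  have hmix : ((s • X) * (s • Y)).trace + ((s • X) * (s • Y)).trace = (X * Y).trace := by
    rw [smul_mul_smul_comm, inv_sqrt_two_mul_self, trace_smul, smul_eq_mul]
    ring
  have hBL : ‖(2 : ℂ) * (-(Xᴴ * X).trace + (Yᴴ * Y).trace)‖ ^ 2
      = 4 * ‖(Yᴴ * Y).trace - (Xᴴ * X).trace‖ ^ 2 := by
    rw [neg_add_eq_sub, norm_mul, mul_pow]
    norm_num
  simp only [V0, hDL, hDR, hDR', hpar, hquad, hmix, hBL, conjTranspose_zero, Matrix.zero_mul,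
    smul_zero, trace_zero, zero_add, sub_self, zero_sub, sub_zero, neg_add_cancel, mul_zero,
    norm_zero, Finset.sum_add_distrib, Finset.sum_sub_distrib, ← Finset.mul_sum]
  simp only [a, c]
  ring

/-- The parity-symmetric configuration `Δ = Δc = X/√2`, `Δbar = Δbarc = Y/√2` never
lies above the maximally parity-violating configuration `Δ = Δbar = 0`, `Δc = X`,
`Δbarc = Y`: for all fields and all real parameters,
`V₀(X/√2, Y/√2, X/√2, Y/√2, κ, κ') ≤ V₀(0, 0, X, Y, κ, κ')`. -/
theorem parity_symmetric_config_not_above (M1sq M2sq Mpsq Mphisq musq g g' : ℝ)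
    (X Y : Matrix (Fin 2) (Fin 2) ℂ) (κ κ' : ℂ) :
    V0 M1sq M2sq Mpsq Mphisq musq g g'
      (((Real.sqrt 2 : ℂ))⁻¹ • X) (((Real.sqrt 2 : ℂ))⁻¹ • Y)
      (((Real.sqrt 2 : ℂ))⁻¹ • X) (((Real.sqrt 2 : ℂ))⁻¹ • Y) κ κ'
    ≤ V0 M1sq M2sq Mpsq Mphisq musq g g' 0 0 X Y κ κ' := by
  rw [← sub_nonneg, V0_zero_zero_sub_V0_parity_symmetric]
  positivity
end
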